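/- If N₁ and N₂ are positive integers with gcd(N₁,N₂) odd and lcm(N₁,N₂) ≥ 5 (condition (*)), then the subgroup Γ = Γ₁(N₁) ⊓ Γ(N₂) of SL(2,ℤ) is torsion-free: its only element of finite order is the identity. In particular −I ∉ Γ. -/

import Mathlib

/-!
Every `A ∈ Γ₁(N₁) ⊓ Γ(N₂)` has trace `≡ 2` modulo `N₁` and modulo `N₂`, hence modulo
`lcm(N₁, N₂) ≥ 5`. If `A` has finite order then `|tr A| ≤ 2`: otherwise the recurrence
`tr A^(k+2) = tr A · tr A^(k+1) - tr A^k` coming from Cayley–Hamilton makes `|tr A^k|`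
strictly increasing, so `A^n = 1` is impossible for `n > 0`. Thus `tr A = 2`, so `A - 1`
squares to zero and `1 = A^n = 1 + n (A - 1)` forces `A = 1`.
-/

open Matrix MatrixGroups CongruenceSubgroup

instance : Fact (Even (Fintype.card (Fin 2))) := ⟨⟨1, rfl⟩⟩

theorem one_add_pow_of_mul_self_eq_zero {R : Type*} [Semiring R] {x : R} (hx : x * x = 0)
    (n : ℕ) : (1 + x) ^ n = 1 + n • x := by
  induction n with
  | zero => simp
  | succ n ih =>
    rw [pow_succ, ih, add_mul, one_mul, mul_add, mul_one, smul_mul_assoc, hx, smul_zero,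
      add_zero, succ_nsmul]
    abel

theorem strictMono_abs_of_two_le_abs_of_recurrence {R : Type*} [CommRing R] [LinearOrder R]
    [IsStrictOrderedRing R] {a : ℕ → R} {t : R} (ht : 2 ≤ |t|)
    (hrec : ∀ n, a (n + 2) = t * a (n + 1) - a n) (h01 : |a 0| < |a 1|) :
    StrictMono fun n ↦ |a n| := by
  refine strictMono_nat_of_lt_succ fun n ↦ ?_
  induction n with
  | zero => exact h01
  | succ n ih =>
    calc |a (n + 1)| < 2 * |a (n + 1)| - |a n| := by linarith
      _ ≤ |t| * |a (n + 1)| - |a n| := by gcongr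
      _ = |t * a (n + 1)| - |a n| := by rw [abs_mul]
      _ ≤ |a (n + 2)| := by rw [hrec]; exact abs_sub_abs_le_abs_sub _ _

namespace Matrix

variable {R : Type*} [CommRing R]

theorem sq_fin_two (M : Matrix (Fin 2) (Fin 2) R) : M ^ 2 = M.trace • M - M.det • 1 := by
  ext i j
  fin_cases i <;> fin_cases j <;>
    simp [sq, mul_apply, trace_fin_two, det_fin_two] <;> ring

theorem trace_pow_add_two_of_det_eq_one {M : Matrix (Fin 2) (Fin 2) R} (hM : M.det = 1)
    (n : ℕ) : (M ^ (n + 2)).trace = M.trace * (M ^ (n + 1)).trace - (M ^ n).trace := by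
  rw [pow_add, sq_fin_two, hM, one_smul, mul_sub, mul_one, Matrix.mul_smul, ← pow_succ,
    trace_sub, trace_smul, smul_eq_mul]

namespace SpecialLinearGroup

theorem abs_trace_le_two_of_isOfFinOrder [LinearOrder R] [IsStrictOrderedRing R]
    {A : SL(2, R)} (hA : IsOfFinOrder A) : |(A : Matrix (Fin 2) (Fin 2) R).trace| ≤ 2 := by
  obtain ⟨n, hn, hAn⟩ := isOfFinOrder_iff_pow_eq_one.mp hA
  by_contra! ht
  have hmono := strictMono_abs_of_two_le_abs_of_recurrence
    (a := fun k ↦ ((A : Matrix (Fin 2) (Fin 2) R) ^ k).trace) ht.le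
    (trace_pow_add_two_of_det_eq_one A.det_coe) (by simpa [abs_two] using ht)
  simpa [← coe_pow, hAn] using hmono hn

theorem eq_one_of_isOfFinOrder_of_trace_eq_two [IsAddTorsionFree R] {A : SL(2, R)}
    (hA : IsOfFinOrder A) (ht : (A : Matrix (Fin 2) (Fin 2) R).trace = 2) : A = 1 := by
  obtain ⟨n, hn, hAn⟩ := isOfFinOrder_iff_pow_eq_one.mp hA
  set N : Matrix (Fin 2) (Fin 2) R := A - 1
  have hN : N * N = 0 := by
    have hsq := sq_fin_two (A : Matrix (Fin 2) (Fin 2) R)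
    rw [ht, A.det_coe, one_smul, two_smul] at hsq
    rw [sub_mul, mul_sub, mul_sub, one_mul, mul_one, mul_one, ← sq, hsq]
    abel
  have hnN : n • N = 0 := by
    have := one_add_pow_of_mul_self_eq_zero hN n
    rwa [add_sub_cancel, ← coe_pow, hAn, coe_one, left_eq_add] at this
  have hN0 : N = 0 := by
    ext i j
    exact nsmul_right_injective hn.ne' (by simpa using congr_fun (congr_fun hnN i) j)
  ext i j
  simpa [N, sub_eq_zero] using congr_fun (congr_fun hN0 i) j

theorem eq_one_of_isOfFinOrder_of_dvd_trace_sub_two {A : SL(2, ℤ)} (hA : IsOfFinOrder A)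
    {m : ℤ} (hm : 5 ≤ m) (hdvd : m ∣ (A : Matrix (Fin 2) (Fin 2) ℤ).trace - 2) : A = 1 := by
  have hbound := abs_le.mp (abs_trace_le_two_of_isOfFinOrder hA)
  have hsmall : |(A : Matrix (Fin 2) (Fin 2) ℤ).trace - 2| < m := by
    rw [abs_lt]
    constructor <;> linarith
  exact eq_one_of_isOfFinOrder_of_trace_eq_two hA
    (sub_eq_zero.mp (Int.eq_zero_of_abs_lt_dvd hdvd hsmall))

end SpecialLinearGroup

end Matrix

namespace CongruenceSubgroup

theorem Gamma_le_Gamma1 (N : ℕ) : Gamma N ≤ Gamma1 N := by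
  intro A hA
  simp_all

theorem dvd_trace_sub_two_of_mem_Gamma1 {N : ℕ} {A : SL(2, ℤ)} (hA : A ∈ Gamma1 N) :
    (N : ℤ) ∣ (A : Matrix (Fin 2) (Fin 2) ℤ).trace - 2 := by
  rw [Gamma1_mem] at hA
  rw [← ZMod.intCast_zmod_eq_zero_iff_dvd]
  push_cast [trace_fin_two, hA.1, hA.2.1]
  norm_num

end CongruenceSubgroup

theorem Gamma1_inf_Gamma_torsionFree_general (N₁ N₂ : ℕ) (hlcm : 5 ≤ Nat.lcm N₁ N₂) :
    (∀ A ∈ Gamma1 N₁ ⊓ Gamma N₂, IsOfFinOrder A → A = 1) ∧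
      (-1 : SL(2, ℤ)) ∉ Gamma1 N₁ ⊓ Gamma N₂ := by
  have torsionFree : ∀ A ∈ Gamma1 N₁ ⊓ Gamma N₂, IsOfFinOrder A → A = 1 := by
    rintro A ⟨h₁, h₂⟩ hA
    have hdvd : (Nat.lcm N₁ N₂ : ℤ) ∣ (A : Matrix (Fin 2) (Fin 2) ℤ).trace - 2 := by
      exact_mod_cast lcm_dvd (dvd_trace_sub_two_of_mem_Gamma1 h₁)
        (dvd_trace_sub_two_of_mem_Gamma1 (Gamma_le_Gamma1 N₂ h₂))
    exact SpecialLinearGroup.eq_one_of_isOfFinOrder_of_dvd_trace_sub_two hA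
      (by exact_mod_cast hlcm) hdvd
  refine ⟨torsionFree, fun hneg ↦ ?_⟩
  have hfin : IsOfFinOrder (-1 : SL(2, ℤ)) :=
    isOfFinOrder_iff_pow_eq_one.mpr ⟨2, two_pos, neg_one_sq⟩
  simpa using congr_arg (fun B : SL(2, ℤ) ↦ B 0 0) (torsionFree _ hneg hfin)

/-- If `gcd(N₁,N₂)` is odd and `lcm(N₁,N₂) ≥ 5`, then `Γ = Γ₁(N₁) ⊓ Γ(N₂)` is torsion-free:
every element of `Γ` of finite order is the identity. In particular `-I ∉ Γ`. -/
theorem Gamma1_inf_Gamma_torsionFree (N₁ N₂ : ℕ) (hN₁ : 0 < N₁) (hN₂ : 0 < N₂)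
    (hodd : Odd (Nat.gcd N₁ N₂)) (hlcm : 5 ≤ Nat.lcm N₁ N₂) :
    (∀ A ∈ Gamma1 N₁ ⊓ Gamma N₂, IsOfFinOrder A → A = 1) ∧
      (-1 : SL(2, ℤ)) ∉ Gamma1 N₁ ⊓ Gamma N₂ :=
  Gamma1_inf_Gamma_torsionFree_general N₁ N₂ hlcm
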